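/- Let u : ℝ^m → [0,1] be a fuzzy set, t ∈ ℝ^m, r > 0, e ∈ S^{m−1}, and α ∈ (0,1). Suppose there exists α₀ > α such that [u]_λ ∩ closedBall(t,r) ≠ ∅ for all λ ∈ [0, α₀], and set ξ := lim_{β→α−} S_{u,t,r}(e, β) − lim_{β→α+} S_{u,t,r}(e, β) and assume ξ > 0. Then there exists δ > 0 such that for all f ∈ S^{m−1} with ‖f − e‖ < δ, one has lim_{β→α−} S_{u,t,r}(f, β) − lim_{β→α+} S_{u,t,r}(f, β) > ξ/2; in particular α ∈ D_{u,t,r,f} for all such f. -/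

import Mathlib

open Set Metric

/-!
Every value `S_{u,t,r}(f, β)` is a supremum of `⟨f, x - t⟩` over points of `closedBall t r`, so
it is `r`-Lipschitz in the direction: `S(f, β) ≤ S(e, β) + ‖f - e‖ r`. Taking
infima over `β < α` and suprema over `β > α`, the one-sided limits at `α` move by at most
`‖f - e‖ r`, so the jump moves by at most `2 ‖f - e‖ r < ξ / 2` once `‖f - e‖ < ξ / (4 r)`.
The nonemptiness of the cuts up to `α₀ > α` keeps both limits finite.
-/

/-- `S_{u,t,r}(e, α)`: the sup of `⟨e, x - t⟩` over `[u]_α ∩ closedBall t r`,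
with value `⊥ = -∞` when this set is empty (`sSup ∅ = ⊥` in `EReal`). -/
noncomputable def Sfun {m : ℕ} (u : EuclideanSpace ℝ (Fin m) → ℝ)
    (t : EuclideanSpace ℝ (Fin m)) (r : ℝ)
    (e : EuclideanSpace ℝ (Fin m)) (α : ℝ) : EReal :=
  sSup ((fun x => ((inner ℝ e (x - t) : ℝ) : EReal)) ''
    ({x | α ≤ u x} ∩ closedBall t r))

/-- The set `D_{u,t,r,e}` of discontinuous points `α ∈ (0,1)` of `S_{u,t,r}(e, ·)`:
(i) `S_{u,t,r}(e, α) ∈ ℝ` and (ii) either `S_{u,t,r}(e, β) = -∞` for all `β > α`, or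
`-∞ < lim_{β→α+} S = ⨆_{β > α} S < lim_{β→α-} S = ⨅_{β < α} S`. -/
noncomputable def Dset {m : ℕ} (u : EuclideanSpace ℝ (Fin m) → ℝ)
    (t : EuclideanSpace ℝ (Fin m)) (r : ℝ)
    (e : EuclideanSpace ℝ (Fin m)) : Set ℝ :=
  {α | α ∈ Ioo (0:ℝ) 1 ∧ Sfun u t r e α ≠ ⊥ ∧ Sfun u t r e α ≠ ⊤ ∧
    ((∀ β ∈ Ioc α 1, Sfun u t r e β = ⊥) ∨
      ((⊥ < ⨆ β ∈ Ioc α 1, Sfun u t r e β) ∧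
        ((⨆ β ∈ Ioc α 1, Sfun u t r e β) < ⨅ β ∈ Ico (0:ℝ) α, Sfun u t r e β)))}

noncomputable def SfunLeftLim {m : ℕ} (u : EuclideanSpace ℝ (Fin m) → ℝ)
    (t : EuclideanSpace ℝ (Fin m)) (r : ℝ) (e : EuclideanSpace ℝ (Fin m)) (α : ℝ) : EReal :=
  ⨅ β ∈ Ico (0:ℝ) α, Sfun u t r e β

noncomputable def SfunRightLim {m : ℕ} (u : EuclideanSpace ℝ (Fin m) → ℝ)
    (t : EuclideanSpace ℝ (Fin m)) (r : ℝ) (e : EuclideanSpace ℝ (Fin m)) (α : ℝ) : EReal :=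
  ⨆ β ∈ Ioc α 1, Sfun u t r e β

namespace EReal

theorem exists_coe_eq_of_coe_le_of_le_coe {a : EReal} {x y : ℝ} (hx : (x : EReal) ≤ a)
    (hy : a ≤ y) : ∃ s : ℝ, a = s :=
  ⟨a.toReal, (coe_toReal (hy.trans_lt (coe_lt_top y)).ne ((bot_lt_coe x).trans_le hx).ne').symm⟩

theorem biSup_le_biSup_add_coe {ι : Type*} {s : Set ι} {F G : ι → EReal} {c : ℝ}
    (h : ∀ i ∈ s, F i ≤ G i + c) : ⨆ i ∈ s, F i ≤ (⨆ i ∈ s, G i) + c :=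
  iSup₂_le fun i hi => (h i hi).trans (add_le_add_left (le_iSup₂ (f := fun i _ => G i) i hi) _)

theorem biInf_le_biInf_add_coe {ι : Type*} {s : Set ι} {F G : ι → EReal} {c : ℝ}
    (h : ∀ i ∈ s, F i ≤ G i + c) : ⨅ i ∈ s, F i ≤ (⨅ i ∈ s, G i) + c := by
  rw [← sub_le_iff_le_add (by simp) (by simp)]
  exact le_iInf₂ fun i hi => sub_le_of_le_add ((iInf₂_le i hi).trans (h i hi))

end EReal

theorem abs_inner_sub_le_norm_mul_of_mem_closedBall {m : ℕ} (f : EuclideanSpace ℝ (Fin m))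
    {x t : EuclideanSpace ℝ (Fin m)} {r : ℝ} (hx : x ∈ closedBall t r) :
    |(inner ℝ f (x - t) : ℝ)| ≤ ‖f‖ * r := by
  rw [mem_closedBall, dist_eq_norm] at hx
  exact (abs_real_inner_le_norm f (x - t)).trans (by gcongr)

section Sfun

variable {m : ℕ} (u : EuclideanSpace ℝ (Fin m) → ℝ) (t : EuclideanSpace ℝ (Fin m)) (r : ℝ)

theorem Sfun_le_norm_mul (f : EuclideanSpace ℝ (Fin m)) (β : ℝ) :
    Sfun u t r f β ≤ ((‖f‖ * r : ℝ) : EReal) := by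
  refine sSup_le ?_
  rintro _ ⟨x, ⟨-, hx⟩, rfl⟩
  exact EReal.coe_le_coe_iff.2 ((le_abs_self _).trans (abs_inner_sub_le_norm_mul_of_mem_closedBall f hx))

theorem neg_norm_mul_le_Sfun (f : EuclideanSpace ℝ (Fin m)) {β : ℝ}
    (hne : ({x | β ≤ u x} ∩ closedBall t r).Nonempty) :
    ((-(‖f‖ * r) : ℝ) : EReal) ≤ Sfun u t r f β := by
  obtain ⟨x, hx⟩ := hne
  refine le_trans ?_ (le_sSup ⟨x, hx, rfl⟩)
  exact EReal.coe_le_coe_iff.2 (abs_le.1 (abs_inner_sub_le_norm_mul_of_mem_closedBall f hx.2)).1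

theorem Sfun_le_Sfun_add_norm_sub_mul (f e : EuclideanSpace ℝ (Fin m)) (β : ℝ) :
    Sfun u t r f β ≤ Sfun u t r e β + ((‖f - e‖ * r : ℝ) : EReal) := by
  refine sSup_le ?_
  rintro _ ⟨x, hx, rfl⟩
  have hfe : (inner ℝ f (x - t) : ℝ) ≤ inner ℝ e (x - t) + ‖f - e‖ * r := by
    have := (le_abs_self _).trans (abs_inner_sub_le_norm_mul_of_mem_closedBall (f - e) hx.2)
    rw [inner_sub_left] at this
    linarith
  calc ((inner ℝ f (x - t) : ℝ) : EReal)
      ≤ ((inner ℝ e (x - t) : ℝ) : EReal) + ((‖f - e‖ * r : ℝ) : EReal) := by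
        exact_mod_cast hfe
    _ ≤ Sfun u t r e β + ((‖f - e‖ * r : ℝ) : EReal) := by
        gcongr
        exact le_sSup (mem_image_of_mem _ hx)

theorem SfunRightLim_le_add (f e : EuclideanSpace ℝ (Fin m)) (α : ℝ) :
    SfunRightLim u t r f α ≤ SfunRightLim u t r e α + ((‖f - e‖ * r : ℝ) : EReal) :=
  EReal.biSup_le_biSup_add_coe fun β _ => Sfun_le_Sfun_add_norm_sub_mul u t r f e β

theorem SfunLeftLim_le_add (f e : EuclideanSpace ℝ (Fin m)) (α : ℝ) :
    SfunLeftLim u t r e α ≤ SfunLeftLim u t r f α + ((‖f - e‖ * r : ℝ) : EReal) :=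
  EReal.biInf_le_biInf_add_coe fun β _ => norm_sub_rev e f ▸ Sfun_le_Sfun_add_norm_sub_mul u t r e f β

theorem exists_coe_eq_SfunLeftLim (f : EuclideanSpace ℝ (Fin m)) {α : ℝ} (hα : 0 < α)
    (hne : ∀ β ∈ Ico (0:ℝ) α, ({x | β ≤ u x} ∩ closedBall t r).Nonempty) :
    ∃ s : ℝ, SfunLeftLim u t r f α = s :=
  EReal.exists_coe_eq_of_coe_le_of_le_coe
    (le_iInf₂ fun β hβ => neg_norm_mul_le_Sfun u t r f (hne β hβ))
    ((iInf₂_le 0 ⟨le_rfl, hα⟩).trans (Sfun_le_norm_mul u t r f 0))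

theorem exists_coe_eq_SfunRightLim (f : EuclideanSpace ℝ (Fin m)) {α β : ℝ} (hβ : β ∈ Ioc α 1)
    (hne : ({x | β ≤ u x} ∩ closedBall t r).Nonempty) :
    ∃ s : ℝ, SfunRightLim u t r f α = s :=
  EReal.exists_coe_eq_of_coe_le_of_le_coe
    ((neg_norm_mul_le_Sfun u t r f hne).trans (le_iSup₂ (f := fun β _ => Sfun u t r f β) β hβ))
    (iSup₂_le fun β _ => Sfun_le_norm_mul u t r f β)

theorem mem_Dset_of_SfunRightLim_lt (f : EuclideanSpace ℝ (Fin m)) {α : ℝ} (hα : α ∈ Ioo (0:ℝ) 1)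
    (hne : ({x | α ≤ u x} ∩ closedBall t r).Nonempty) (hbot : ⊥ < SfunRightLim u t r f α)
    (hlt : SfunRightLim u t r f α < SfunLeftLim u t r f α) : α ∈ Dset u t r f :=
  ⟨hα, ((EReal.bot_lt_coe _).trans_le (neg_norm_mul_le_Sfun u t r f hne)).ne',
    ((Sfun_le_norm_mul u t r f α).trans_lt (EReal.coe_lt_top _)).ne, Or.inr ⟨hbot, hlt⟩⟩

end Sfun

theorem jump_stable_general {m : ℕ} (u : EuclideanSpace ℝ (Fin m) → ℝ)
    (t : EuclideanSpace ℝ (Fin m)) (r : ℝ) (hr : 0 < r)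
    (e : EuclideanSpace ℝ (Fin m))
    (α : ℝ) (hα : α ∈ Ioo (0:ℝ) 1)
    (α₀ : ℝ) (hα₀ : α < α₀)
    (hne : ∀ l ∈ Icc (0:ℝ) α₀, ({x | l ≤ u x} ∩ closedBall t r).Nonempty)
    (ξ : ℝ)
    (hξ : (⨅ β ∈ Ico (0:ℝ) α, Sfun u t r e β) - (⨆ β ∈ Ioc α 1, Sfun u t r e β)
      = ((ξ : ℝ) : EReal))
    (hξpos : 0 < ξ) :
    ∃ δ > 0, ∀ f ∈ sphere (0 : EuclideanSpace ℝ (Fin m)) 1, ‖f - e‖ < δ →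
      ((((ξ / 2 : ℝ)) : EReal) <
        (⨅ β ∈ Ico (0:ℝ) α, Sfun u t r f β) - (⨆ β ∈ Ioc α 1, Sfun u t r f β)) ∧
      α ∈ Dset u t r f := by
  have hβ₁ : min α₀ 1 ∈ Ioc α 1 := ⟨lt_min hα₀ hα.2, min_le_right _ _⟩
  have hne_left : ∀ β ∈ Ico (0:ℝ) α, ({x | β ≤ u x} ∩ closedBall t r).Nonempty :=
    fun β hβ => hne β ⟨hβ.1, (hβ.2.trans hα₀).le⟩
  have hne_right := hne (min α₀ 1) ⟨hα.1.le.trans hβ₁.1.le, min_le_left _ _⟩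
  obtain ⟨Le, hLe⟩ := exists_coe_eq_SfunLeftLim u t r e hα.1 hne_left
  obtain ⟨Re, hRe⟩ := exists_coe_eq_SfunRightLim u t r e hβ₁ hne_right
  change SfunLeftLim u t r e α - SfunRightLim u t r e α = ξ at hξ
  rw [hLe, hRe, ← EReal.coe_sub, EReal.coe_eq_coe_iff] at hξ
  refine ⟨ξ / (4 * r), by positivity, fun f _ hfe => ?_⟩
  have hc : ‖f - e‖ * r < ξ / 4 := by
    rw [lt_div_iff₀ (by positivity)] at hfe
    linarith
  obtain ⟨Lf, hLf⟩ := exists_coe_eq_SfunLeftLim u t r f hα.1 hne_left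
  obtain ⟨Rf, hRf⟩ := exists_coe_eq_SfunRightLim u t r f hβ₁ hne_right
  have hL := SfunLeftLim_le_add u t r f e α
  have hR := SfunRightLim_le_add u t r f e α
  rw [hLe, hLf, ← EReal.coe_add, EReal.coe_le_coe_iff] at hL
  rw [hRe, hRf, ← EReal.coe_add, EReal.coe_le_coe_iff] at hR
  refine ⟨?_, mem_Dset_of_SfunRightLim_lt u t r f hα (hne α ⟨hα.1.le, hα₀.le⟩) ?_ ?_⟩
  · change ((ξ / 2 : ℝ) : EReal) < SfunLeftLim u t r f α - SfunRightLim u t r f α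
    rw [hLf, hRf, ← EReal.coe_sub, EReal.coe_lt_coe_iff]
    linarith
  · exact hRf ▸ EReal.bot_lt_coe Rf
  · rw [hLf, hRf, EReal.coe_lt_coe_iff]
    linarith

/-- If `[u]_λ ∩ closedBall(t,r) ≠ ∅` for all `λ ∈ [0, α₀]` with `α₀ > α`, and
`ξ := lim_{β→α-} S_{u,t,r}(e,β) - lim_{β→α+} S_{u,t,r}(e,β) > 0`, then there is `δ > 0`
such that for all `f ∈ S^{m-1}` with `‖f - e‖ < δ`, the corresponding jump of
`S_{u,t,r}(f, ·)` at `α` exceeds `ξ/2`; in particular `α ∈ D_{u,t,r,f}`. -/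
theorem jump_stable {m : ℕ} (u : EuclideanSpace ℝ (Fin m) → ℝ)
    (hu : ∀ x, u x ∈ Icc (0:ℝ) 1)
    (t : EuclideanSpace ℝ (Fin m)) (r : ℝ) (hr : 0 < r)
    (e : EuclideanSpace ℝ (Fin m)) (he : e ∈ sphere (0 : EuclideanSpace ℝ (Fin m)) 1)
    (α : ℝ) (hα : α ∈ Ioo (0:ℝ) 1)
    (α₀ : ℝ) (hα₀ : α < α₀)
    (hne : ∀ l ∈ Icc (0:ℝ) α₀, ({x | l ≤ u x} ∩ closedBall t r).Nonempty)
    (ξ : ℝ)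
    (hξ : (⨅ β ∈ Ico (0:ℝ) α, Sfun u t r e β) - (⨆ β ∈ Ioc α 1, Sfun u t r e β)
      = ((ξ : ℝ) : EReal))
    (hξpos : 0 < ξ) :
    ∃ δ > 0, ∀ f ∈ sphere (0 : EuclideanSpace ℝ (Fin m)) 1, ‖f - e‖ < δ →
      ((((ξ / 2 : ℝ)) : EReal) <
        (⨅ β ∈ Ico (0:ℝ) α, Sfun u t r f β) - (⨆ β ∈ Ioc α 1, Sfun u t r f β)) ∧
      α ∈ Dset u t r f :=
  jump_stable_general u t r hr e α hα α₀ hα₀ hne ξ hξ hξpos
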